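/- arXiv:2012.04819 — 2 statements merged into one kernel-verified Lean document; each statement's English description precedes it below -/
import Mathlib

section
/- Let 0 < α < 1, let x : [t₀,T] → (0,∞) be continuously differentiable, and fix x* > 0. Define V(t) = x(t) − x* − x* ln(x(t)/x*). Then for every t ∈ (t₀,T], the Caputo derivative of V of order α based at t₀ satisfies ᶜD^α V(t) ≤ (1 − x*/x(t)) · ᶜD^α x(t). -/
/-- The Caputo fractional derivative of order `α` (0 < α < 1) based at `t₀`:
`ᶜD^α φ(t) = (1/Γ(1−α)) ∫_{t₀}^{t} φ′(x)(t−x)^{−α} dx`. -/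
noncomputable def caputo (α t₀ : ℝ) (φ : ℝ → ℝ) (t : ℝ) : ℝ :=
  (1 / Real.Gamma (1 - α)) * ∫ x in t₀..t, deriv φ x * (t - x) ^ (-α)

/-!
The function `F y = y - x* - x* log (y / x*)` is convex on `(0, ∞)`, so for fixed `t` its Bregman
divergence `g τ = F (x τ) - F (x t) - F' (x t) (x τ - x t)` is nonnegative, vanishes at `τ = t`,
and has derivative `(F' (x τ) - F' (x t)) x' τ`. Hence the difference of the two sides is
`Γ(1 - α)⁻¹ ∫ g' τ (t - τ)^(-α) dτ`. Integrating by parts puts the derivative on the kernel, whose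
derivative `α (t - τ)^(-α-1)` is positive, and leaves the boundary term `-g t₀ (t - t₀)^(-α)`;
both are nonpositive. The singular boundary term at `τ = t` disappears because `g τ = O(t - τ)`,
which is made rigorous by integrating by parts on `[t₀, s]` and letting `s → t`.
-/

open Set Filter Topology MeasureTheory

section RiemannLiouvilleKernel

variable {α t : ℝ}

lemma intervalIntegrable_rpow_sub_left (hα : α < 1) (a b : ℝ) :
    IntervalIntegrable (fun τ => (t - τ) ^ (-α)) volume a b := by
  simpa using (intervalIntegral.intervalIntegrable_rpow' (a := t - a) (b := t - b) (r := -α)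
    (by linarith)).comp_sub_left t

lemma integral_rpow_sub_left (hα : α < 1) (s : ℝ) :
    ∫ τ in s..t, (t - τ) ^ (-α) = (t - s) ^ (1 - α) / (1 - α) := by
  rw [intervalIntegral.integral_comp_sub_left (fun u => u ^ (-α)) t, sub_self,
    integral_rpow (Or.inl (by linarith)), Real.zero_rpow (by linarith), neg_add_eq_sub, sub_zero]

lemma integral_mul_rpow_sub_left_le {f : ℝ → ℝ} {s M : ℝ} (hα : α < 1) (hst : s ≤ t)
    (hf : ContinuousOn f (Icc s t)) (hM : ∀ τ ∈ Icc s t, f τ ≤ M) :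
    ∫ τ in s..t, f τ * (t - τ) ^ (-α) ≤ M * ((t - s) ^ (1 - α) / (1 - α)) := by
  rw [← integral_rpow_sub_left hα, ← intervalIntegral.integral_const_mul]
  refine intervalIntegral.integral_mono_on hst ?_
    ((intervalIntegrable_rpow_sub_left hα s t).const_mul M) fun τ hτ =>
      mul_le_mul_of_nonneg_right (hM τ hτ) (Real.rpow_nonneg (by linarith [hτ.2]) _)
  exact (intervalIntegrable_rpow_sub_left hα s t).continuousOn_mul (by rwa [uIcc_of_le hst])

lemma integral_deriv_mul_rpow_sub_left_le {g g' : ℝ → ℝ} {a s : ℝ} (hα : 0 ≤ α) (has : a ≤ s)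
    (hst : s < t) (hg : ContinuousOn g (Icc a s)) (hg' : ContinuousOn g' (Icc a s))
    (hderiv : ∀ τ ∈ Ioo a s, HasDerivAt g (g' τ) τ)
    (hnonneg : ∀ τ ∈ Icc a s, 0 ≤ g τ) :
    ∫ τ in a..s, g' τ * (t - τ) ^ (-α) ≤ g s * (t - s) ^ (-α) := by
  have hpos : ∀ τ ∈ Icc a s, 0 < t - τ := fun τ hτ => by linarith [hτ.2]
  have hk : ContinuousOn (fun τ => (t - τ) ^ (-α)) (Icc a s) :=
    (continuousOn_const.sub continuousOn_id).rpow_const fun τ hτ => Or.inl (hpos τ hτ).ne'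
  have hk' : ContinuousOn (fun τ => α * (t - τ) ^ (-α - 1)) (Icc a s) :=
    continuousOn_const.mul <|
      (continuousOn_const.sub continuousOn_id).rpow_const fun τ hτ => Or.inl (hpos τ hτ).ne'
  have hkd : ∀ τ ∈ Ioo a s,
      HasDerivAt (fun τ => (t - τ) ^ (-α)) (α * (t - τ) ^ (-α - 1)) τ := by
    intro τ hτ
    convert ((hasDerivAt_id' τ).const_sub t).rpow_const (p := -α)
      (Or.inl (hpos τ (Ioo_subset_Icc_self hτ)).ne') using 1
    ring
  have hibp := intervalIntegral.integral_deriv_mul_eq_sub_of_hasDerivAt (u := g) (u' := g')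
    (v := fun τ => (t - τ) ^ (-α)) (v' := fun τ => α * (t - τ) ^ (-α - 1))
    (by rwa [uIcc_of_le has]) (by rwa [uIcc_of_le has])
    (by simpa only [min_eq_left has, max_eq_right has] using hderiv)
    (by simpa only [min_eq_left has, max_eq_right has] using hkd)
    (hg'.intervalIntegrable_of_Icc has) (hk'.intervalIntegrable_of_Icc has)
  rw [intervalIntegral.integral_add (f := fun τ => g' τ * (t - τ) ^ (-α))
    (g := fun τ => g τ * (α * (t - τ) ^ (-α - 1)))
    ((hg'.mul hk).intervalIntegrable_of_Icc has)
    ((hg.mul hk').intervalIntegrable_of_Icc has)] at hibp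
  have hrest : 0 ≤ ∫ τ in a..s, g τ * (α * (t - τ) ^ (-α - 1)) :=
    intervalIntegral.integral_nonneg has fun τ hτ => mul_nonneg (hnonneg τ hτ)
      (mul_nonneg hα (Real.rpow_nonneg (hpos τ hτ).le _))
  have hleft : 0 ≤ g a * (t - a) ^ (-α) :=
    mul_nonneg (hnonneg a (left_mem_Icc.2 has))
      (Real.rpow_nonneg (hpos a (left_mem_Icc.2 has)).le _)
  linarith

theorem integral_deriv_mul_rpow_sub_left_nonpos {g g' : ℝ → ℝ} {a : ℝ} (hα0 : 0 ≤ α)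
    (hα1 : α < 1) (hat : a < t) (hg : ContinuousOn g (Icc a t))
    (hg' : ContinuousOn g' (Icc a t))
    (hderiv : ∀ τ ∈ Ioo a t, HasDerivAt g (g' τ) τ) (hnonneg : ∀ τ ∈ Icc a t, 0 ≤ g τ)
    (hgt : g t = 0) :
    ∫ τ in a..t, g' τ * (t - τ) ^ (-α) ≤ 0 := by
  obtain ⟨M, hM⟩ := isCompact_Icc.exists_bound_of_continuousOn hg'
  have hM' : ∀ τ ∈ Icc a t, |g' τ| ≤ M := hM
  have hint : ∀ b c, b ≤ c → Icc b c ⊆ Icc a t →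
      IntervalIntegrable (fun τ => g' τ * (t - τ) ^ (-α)) volume b c := fun b c hbc hsub =>
    (intervalIntegrable_rpow_sub_left hα1 b c).continuousOn_mul
      (by rw [uIcc_of_le hbc]; exact hg'.mono hsub)
  have hbound : ∀ s ∈ Ioo a t,
      ∫ τ in a..t, g' τ * (t - τ) ^ (-α) ≤ (M + M / (1 - α)) * (t - s) ^ (1 - α) := by
    intro s hs
    have hts : 0 < t - s := sub_pos.2 hs.2
    have hleft : Icc a s ⊆ Icc a t := Icc_subset_Icc_right hs.2.le
    have hright : Icc s t ⊆ Icc a t := Icc_subset_Icc_left hs.1.le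
    have hgs : g s ≤ M * (t - s) := by
      have hderiv' : ∀ τ ∈ interior (Icc s t), HasDerivAt g (g' τ) τ := by
        rw [interior_Icc]
        exact fun τ hτ => hderiv τ ⟨hs.1.trans hτ.1, hτ.2⟩
      have := (convex_Icc s t).mul_sub_le_image_sub_of_le_deriv (C := -M) (hg.mono hright)
        (fun τ hτ => (hderiv' τ hτ).differentiableAt.differentiableWithinAt)
        (fun τ hτ => (hderiv' τ hτ).deriv ▸
          neg_le_of_abs_le (hM' τ (hright (interior_subset hτ))))
        s (left_mem_Icc.2 hs.2.le) t (right_mem_Icc.2 hs.2.le) hs.2.le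
      linarith
    have hhead := integral_deriv_mul_rpow_sub_left_le hα0 hs.1.le hs.2 (hg.mono hleft)
      (hg'.mono hleft) (fun τ hτ => hderiv τ ⟨hτ.1, hτ.2.trans hs.2⟩)
      fun τ hτ => hnonneg τ (hleft hτ)
    have htail := integral_mul_rpow_sub_left_le hα1 hs.2.le (hg'.mono hright)
      fun τ hτ => (le_abs_self _).trans (hM' τ (hright hτ))
    calc ∫ τ in a..t, g' τ * (t - τ) ^ (-α)
        = (∫ τ in a..s, g' τ * (t - τ) ^ (-α)) + ∫ τ in s..t, g' τ * (t - τ) ^ (-α) :=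
          (intervalIntegral.integral_add_adjacent_intervals (hint a s hs.1.le hleft)
            (hint s t hs.2.le hright)).symm
      _ ≤ M * (t - s) * (t - s) ^ (-α) + M * ((t - s) ^ (1 - α) / (1 - α)) :=
          add_le_add (hhead.trans (mul_le_mul_of_nonneg_right hgs (Real.rpow_nonneg hts.le _)))
            htail
      _ = (M + M / (1 - α)) * (t - s) ^ (1 - α) := by
          rw [sub_eq_add_neg 1 α, Real.rpow_add hts, Real.rpow_one]
          ring
  have hlim : Tendsto (fun s => (M + M / (1 - α)) * (t - s) ^ (1 - α)) (𝓝[<] t) (𝓝 0) := by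
    have hcont : Continuous fun s => (M + M / (1 - α)) * (t - s) ^ (1 - α) :=
      continuous_const.mul ((Real.continuous_rpow_const (by linarith)).comp
        (continuous_const.sub continuous_id))
    simpa [Real.zero_rpow (by linarith : 1 - α ≠ 0)] using
      (hcont.tendsto t).mono_left nhdsWithin_le_nhds
  exact ge_of_tendsto hlim (eventually_of_mem (Ioo_mem_nhdsLT hat) hbound)

end RiemannLiouvilleKernel

lemma caputo_eq_of_hasDerivAt {α a t : ℝ} {φ φ' : ℝ → ℝ} (hat : a ≤ t)
    (hφ : ∀ τ ∈ Ioo a t, HasDerivAt φ (φ' τ) τ) :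
    caputo α a φ t = 1 / Real.Gamma (1 - α) * ∫ τ in a..t, φ' τ * (t - τ) ^ (-α) := by
  unfold caputo
  congr 1
  exact intervalIntegral.integral_congr_Ioo_of_le hat fun τ hτ => by rw [(hφ τ hτ).deriv]

lemma ConvexOn.add_mul_sub_le_of_hasDerivAt {F : ℝ → ℝ} {s : Set ℝ} {y z F' : ℝ}
    (hF : ConvexOn ℝ s F) (hy : y ∈ s) (hz : z ∈ s) (hd : HasDerivAt F F' z) :
    F z + F' * (y - z) ≤ F y := by
  rcases lt_trichotomy z y with hzy | rfl | hyz
  · have := hF.le_slope_of_hasDerivAt hz hy hzy hd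
    rw [slope_def_field, le_div_iff₀ (sub_pos.2 hzy)] at this
    linarith
  · simp
  · have := hF.slope_le_of_hasDerivAt hy hz hyz hd
    rw [slope_def_field, div_le_iff₀ (sub_pos.2 hyz)] at this
    linarith

theorem ConvexOn.caputo_comp_le {F F' x : ℝ → ℝ} {s : Set ℝ} {α a t : ℝ} (hF : ConvexOn ℝ s F)
    (hF' : ∀ y ∈ s, HasDerivAt F (F' y) y) (hF'c : ContinuousOn F' s) (hα0 : 0 ≤ α)
    (hα1 : α < 1) (hat : a < t) (hx : ContDiffOn ℝ 1 x (Icc a t)) (hxs : MapsTo x (Icc a t) s) :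
    caputo α a (F ∘ x) t ≤ F' (x t) * caputo α a x t := by
  set x' := derivWithin x (Icc a t)
  have hx'c : ContinuousOn x' (Icc a t) :=
    hx.continuousOn_derivWithin (uniqueDiffOn_Icc hat) le_rfl
  have hxd : ∀ τ ∈ Ioo a t, HasDerivAt x (x' τ) τ := fun τ hτ =>
    (hx.differentiableOn one_ne_zero τ (Ioo_subset_Icc_self hτ)).hasDerivWithinAt.hasDerivAt
      (Icc_mem_nhds hτ.1 hτ.2)
  have hFxd : ∀ τ ∈ Ioo a t, HasDerivAt (F ∘ x) (F' (x τ) * x' τ) τ := fun τ hτ =>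
    (hF' _ (hxs (Ioo_subset_Icc_self hτ))).comp τ (hxd τ hτ)
  have hxt : x t ∈ s := hxs (right_mem_Icc.2 hat.le)
  have hFc : ContinuousOn F s := fun y hy => (hF' y hy).continuousAt.continuousWithinAt
  set g := fun τ => F (x τ) - F (x t) - F' (x t) * (x τ - x t)
  set g' := fun τ => (F' (x τ) - F' (x t)) * x' τ
  have hg : ContinuousOn g (Icc a t) :=
    ((hFc.comp hx.continuousOn hxs).sub continuousOn_const).sub
      (continuousOn_const.mul (hx.continuousOn.sub continuousOn_const))
  have hg' : ContinuousOn g' (Icc a t) :=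
    ((hF'c.comp hx.continuousOn hxs).sub continuousOn_const).mul hx'c
  have hgd : ∀ τ ∈ Ioo a t, HasDerivAt g (g' τ) τ := fun τ hτ => by
    refine (((hFxd τ hτ).sub_const (F (x t))).sub
      (((hxd τ hτ).sub_const (x t)).const_mul (F' (x t)))).congr_deriv ?_
    simp only [g']
    ring
  have hgnonneg : ∀ τ ∈ Icc a t, 0 ≤ g τ := fun τ hτ => by
    linarith [hF.add_mul_sub_le_of_hasDerivAt (hxs hτ) hxt (hF' _ hxt)]
  have key :=
    integral_deriv_mul_rpow_sub_left_nonpos hα0 hα1 hat hg hg' hgd hgnonneg (by simp [g])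
  have hk := intervalIntegrable_rpow_sub_left (t := t) hα1 a t
  have hint : IntervalIntegrable (fun τ => F' (x τ) * x' τ * (t - τ) ^ (-α)) volume a t :=
    hk.continuousOn_mul <| by
      rw [uIcc_of_le hat.le]; exact (hF'c.comp hx.continuousOn hxs).mul hx'c
  have hint' : IntervalIntegrable (fun τ => F' (x t) * (x' τ * (t - τ) ^ (-α))) volume a t :=
    (hk.continuousOn_mul (by rw [uIcc_of_le hat.le]; exact hx'c)).const_mul _
  rw [caputo_eq_of_hasDerivAt hat.le hFxd, caputo_eq_of_hasDerivAt hat.le hxd,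
    mul_left_comm, ← intervalIntegral.integral_const_mul (F' (x t))]
  have hΓ : 0 < Real.Gamma (1 - α) := Real.Gamma_pos_of_pos (by linarith)
  refine mul_le_mul_of_nonneg_left ?_ (one_div_pos.2 hΓ).le
  rw [← sub_nonpos, ← intervalIntegral.integral_sub hint hint']
  refine (intervalIntegral.integral_congr fun τ _ => ?_).le.trans key
  simp only [g']
  ring

section VolterraFunction

variable {c : ℝ}

lemma convexOn_volterra (hc : 0 ≤ c) :
    ConvexOn ℝ (Ioi 0) fun y => y - c - c * Real.log (y / c) := by
  refine (((convexOn_id (convex_Ioi (0 : ℝ))).add_const (c * Real.log c - c)).add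
    (strictConcaveOn_log_Ioi.concaveOn.neg.smul hc)).congr fun y hy => ?_
  rcases hc.eq_or_lt with rfl | hc
  · simp
  simp only [Pi.add_apply, Pi.neg_apply, id, smul_eq_mul, Real.log_div (ne_of_gt hy) hc.ne']
  ring

lemma hasDerivAt_volterra (hc : c ≠ 0) {y : ℝ} (hy : y ≠ 0) :
    HasDerivAt (fun y => y - c - c * Real.log (y / c)) (1 - c / y) y := by
  refine (((hasDerivAt_id' y).sub_const c).sub
    ((((hasDerivAt_id' y).div_const c).log (div_ne_zero hy hc)).const_mul c)).congr_deriv ?_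
  field_simp

end VolterraFunction

theorem stmt_5_general (α t₀ T xstar : ℝ) (hα0 : 0 < α) (hα1 : α < 1)
    (hxstar : 0 < xstar)
    (x : ℝ → ℝ)
    (hx : ContDiffOn ℝ 1 x (Set.Icc t₀ T))
    (hxpos : ∀ y ∈ Set.Icc t₀ T, 0 < x y) :
    ∀ t ∈ Set.Ioc t₀ T,
      caputo α t₀ (fun τ => x τ - xstar - xstar * Real.log (x τ / xstar)) t
        ≤ (1 - xstar / x t) * caputo α t₀ x t := by
  intro t ⟨ht₀, htT⟩
  have hsub : Icc t₀ t ⊆ Icc t₀ T := Icc_subset_Icc_right htT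
  exact (convexOn_volterra hxstar.le).caputo_comp_le
    (fun y hy => hasDerivAt_volterra hxstar.ne' (ne_of_gt hy))
    (continuousOn_const.sub (continuousOn_const.div continuousOn_id fun y hy => ne_of_gt hy))
    hα0.le hα1 ht₀ (hx.mono hsub) fun y hy => hxpos y (hsub hy)

theorem stmt_5 (α t₀ T xstar : ℝ) (hα0 : 0 < α) (hα1 : α < 1) (hT : t₀ < T)
    (hxstar : 0 < xstar)
    (x : ℝ → ℝ)
    (hx : ContDiffOn ℝ 1 x (Set.Icc t₀ T))
    (hxpos : ∀ y ∈ Set.Icc t₀ T, 0 < x y) :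
    ∀ t ∈ Set.Ioc t₀ T,
      caputo α t₀ (fun τ => x τ - xstar - xstar * Real.log (x τ / xstar)) t
        ≤ (1 - xstar / x t) * caputo α t₀ x t :=
  stmt_5_general α t₀ T xstar hα0 hα1 hxstar x hx hxpos
end

section
/- (Generalized mean value theorem) Let 0 < α ≤ 1, a < b, and let φ : [a,b] → ℝ be continuously differentiable. Then the Caputo derivative ᶜD^α φ (based at a) extends continuously to [a,b] (with value 0 at a), and there exists ξ ∈ [a,b] such that φ(b) = φ(a) + (1/Γ(α+1)) · ᶜD^α φ(ξ) · (b−a)^α. -/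
/-!
For `α < 1`, exchanging the order of integration over the triangle `a < x < t < b` and evaluating
the Beta integral `∫ₓᵇ (t - x)^(-α) (b - t)^(α - 1) dt = Γ(1 - α) Γ(α)` show that the
Riemann–Liouville integral of order `α` undoes the Caputo derivative:
`∫ₐᵇ (b - t)^(α - 1) ᶜD^α φ(t) dt = Γ(α) (φ(b) - φ(a))`; for `α = 1` this is the fundamental
theorem of calculus. The weight `(b - t)^(α - 1)` is nonnegative with total mass `(b - a)^α / α`,
so the mean value theorem for weighted integrals produces `ξ`, and `Γ(α + 1) = α Γ(α)`.
-/

open MeasureTheory Set Function Filter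

/-- The Caputo fractional derivative of order `α` (0 < α ≤ 1) based at `a`,
written in terms of the (given, continuous) derivative `φ'`:
for `α < 1`, `ᶜD^α φ(t) = (1/Γ(1−α)) ∫ₐᵗ φ′(x)(t−x)^{−α} dx`, and `ᶜD¹φ = φ′`. -/
noncomputable def caputoD (α a : ℝ) (φ' : ℝ → ℝ) (t : ℝ) : ℝ :=
  if α = 1 then φ' t
  else (1 / Real.Gamma (1 - α)) * ∫ x in a..t, φ' x * (t - x) ^ (-α)

theorem exists_integral_mul_eq_mul_integral {f w : ℝ → ℝ} {a b : ℝ} (hab : a ≤ b)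
    (hf : ContinuousOn f (Icc a b)) (hw : IntervalIntegrable w volume a b)
    (hw0 : ∀ x ∈ Icc a b, 0 ≤ w x) :
    ∃ ξ ∈ Icc a b, ∫ x in a..b, w x * f x = f ξ * ∫ x in a..b, w x := by
  obtain ⟨xmin, hxmin, hmin⟩ := isCompact_Icc.exists_isMinOn (nonempty_Icc.2 hab) hf
  obtain ⟨xmax, hxmax, hmax⟩ := isCompact_Icc.exists_isMaxOn (nonempty_Icc.2 hab) hf
  have hwf : IntervalIntegrable (fun x => w x * f x) volume a b :=
    hw.mul_continuousOn (by rwa [uIcc_of_le hab])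
  have hlow : f xmin * ∫ x in a..b, w x ≤ ∫ x in a..b, w x * f x := by
    rw [← intervalIntegral.integral_const_mul]
    exact intervalIntegral.integral_mono_on hab (hw.const_mul _) hwf fun x hx => by
      rw [mul_comm]; exact mul_le_mul_of_nonneg_left (hmin hx) (hw0 x hx)
  have hhigh : ∫ x in a..b, w x * f x ≤ f xmax * ∫ x in a..b, w x := by
    rw [← intervalIntegral.integral_const_mul]
    exact intervalIntegral.integral_mono_on hab hwf (hw.const_mul _) fun x hx => by
      rw [mul_comm (f xmax)]; exact mul_le_mul_of_nonneg_left (hmax hx) (hw0 x hx)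
  rcases (intervalIntegral.integral_nonneg hab hw0).eq_or_lt with hzero | hpos
  · exact ⟨a, left_mem_Icc.2 hab, by rw [← hzero] at hlow hhigh ⊢; linarith⟩
  obtain ⟨ξ, hξ, hfξ⟩ := isPreconnected_Icc.intermediate_value hxmin hxmax hf
    ⟨(le_div_iff₀ hpos).2 hlow, (div_le_iff₀ hpos).2 hhigh⟩
  exact ⟨ξ, hξ, by rw [hfξ, div_mul_cancel₀ _ hpos.ne']⟩

theorem integral_sub_rpow_mul_sub_rpow {p q x b : ℝ} (hp : 0 < p) (hq : 0 < q) (hxb : x < b) :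
    ∫ t in x..b, (t - x) ^ (p - 1) * (b - t) ^ (q - 1) =
      (b - x) ^ (p + q - 1) * (Real.Gamma p * Real.Gamma q / Real.Gamma (p + q)) := by
  have hc : 0 < b - x := sub_pos.2 hxb
  have hshift := intervalIntegral.integral_comp_sub_right (a := x) (b := b)
    (fun s => s ^ (p - 1) * ((b - x) - s) ^ (q - 1)) x
  simp only [sub_self, sub_sub_sub_cancel_right] at hshift
  have hbeta := Complex.betaIntegral_scaled p q hc
  rw [Complex.betaIntegral_eq_Gamma_mul_div _ _ (by simpa) (by simpa)] at hbeta
  rw [hshift]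
  apply Complex.ofReal_injective
  rw [← intervalIntegral.integral_ofReal]
  convert hbeta using 1
  · refine intervalIntegral.integral_congr fun s hs => ?_
    rw [uIcc_of_le hc.le] at hs
    push_cast
    rw [Complex.ofReal_cpow hs.1, Complex.ofReal_cpow (by linarith [hs.2])]
    push_cast
    rfl
  · rw [← Complex.ofReal_add, Complex.Gamma_ofReal, Complex.Gamma_ofReal, Complex.Gamma_ofReal]
    push_cast [Complex.ofReal_cpow hc.le]
    rfl

section Triangle

variable {E : Type*} [NormedAddCommGroup E] [NormedSpace ℝ E] {a b : ℝ} {F : ℝ → ℝ → E}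

theorem integral_Ioo_indicator_triangle_snd {t : ℝ} (ht : t ∈ Icc a b) :
    ∫ x in Ioo a b, {p : ℝ × ℝ | p.2 < p.1}.indicator (uncurry F) (t, x) = ∫ x in a..t, F t x := by
  have hsec : ∀ x, {p : ℝ × ℝ | p.2 < p.1}.indicator (uncurry F) (t, x) =
      (Iio t).indicator (F t) x := fun x => by simp [indicator_apply]
  simp_rw [hsec]
  rw [setIntegral_indicator measurableSet_Iio, Ioo_inter_Iio, min_eq_right ht.2,
    intervalIntegral.integral_of_le ht.1, integral_Ioc_eq_integral_Ioo]

theorem integral_Ioo_indicator_triangle_fst {x : ℝ} (hx : x ∈ Icc a b) :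
    ∫ t in Ioo a b, {p : ℝ × ℝ | p.2 < p.1}.indicator (uncurry F) (t, x) = ∫ t in x..b, F t x := by
  have hsec : ∀ t, {p : ℝ × ℝ | p.2 < p.1}.indicator (uncurry F) (t, x) =
      (Ioi x).indicator (fun t => F t x) t := fun t => by simp [indicator_apply]
  simp_rw [hsec]
  rw [setIntegral_indicator measurableSet_Ioi, Ioo_inter_Ioi, max_eq_right hx.1,
    intervalIntegral.integral_of_le hx.2, integral_Ioc_eq_integral_Ioo]

theorem integral_integral_swap_triangle (hab : a ≤ b)
    (hF : Integrable ({p : ℝ × ℝ | p.2 < p.1}.indicator (uncurry F))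
      ((volume.restrict (Ioo a b)).prod (volume.restrict (Ioo a b)))) :
    ∫ t in a..b, ∫ x in a..t, F t x = ∫ x in a..b, ∫ t in x..b, F t x := by
  have hswap := integral_integral_swap (f := fun t x =>
    {p : ℝ × ℝ | p.2 < p.1}.indicator (uncurry F) (t, x)) hF
  rw [intervalIntegral.integral_of_le hab, integral_Ioc_eq_integral_Ioo,
    intervalIntegral.integral_of_le hab, integral_Ioc_eq_integral_Ioo,
    ← setIntegral_congr_fun measurableSet_Ioo fun t ht =>
      integral_Ioo_indicator_triangle_snd (Ioo_subset_Icc_self ht),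
    ← setIntegral_congr_fun measurableSet_Ioo fun x hx =>
      integral_Ioo_indicator_triangle_fst (Ioo_subset_Icc_self hx)]
  exact hswap

end Triangle

theorem integral_sub_rpow_neg_mul_sub_rpow {α x b : ℝ} (hα0 : 0 < α) (hα1 : α < 1) (hxb : x < b) :
    ∫ t in x..b, (t - x) ^ (-α) * (b - t) ^ (α - 1) = Real.Gamma (1 - α) * Real.Gamma α := by
  have h := integral_sub_rpow_mul_sub_rpow (p := 1 - α) (q := α) (by linarith) hα0 hxb
  rwa [sub_sub_cancel_left, sub_add_cancel, sub_self, Real.rpow_zero, one_mul, Real.Gamma_one,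
    div_one] at h

theorem integrable_indicator_triangle_mul_sub_rpow {α a b : ℝ} (hα0 : 0 < α) (hα1 : α < 1)
    {ψ : ℝ → ℝ} (hψ : ContinuousOn ψ (Icc a b)) :
    Integrable ({p : ℝ × ℝ | p.2 < p.1}.indicator
        (uncurry fun t x => ψ x * ((t - x) ^ (-α) * (b - t) ^ (α - 1))))
      ((volume.restrict (Ioo a b)).prod (volume.restrict (Ioo a b))) := by
  set C := Real.Gamma (1 - α) * Real.Gamma α with hC_def
  have hC : 0 < C := mul_pos (Real.Gamma_pos_of_pos (by linarith)) (Real.Gamma_pos_of_pos hα0)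
  have hψm : AEStronglyMeasurable ψ (volume.restrict (Ioo a b)) :=
    (hψ.mono Ioo_subset_Icc_self).aestronglyMeasurable measurableSet_Ioo
  refine (integrable_prod_iff' ((hψm.comp_snd.mul (Measurable.aestronglyMeasurable
    (by fun_prop))).indicator (measurableSet_lt measurable_snd measurable_fst))).2 ⟨?_, ?_⟩
  · filter_upwards [ae_restrict_mem measurableSet_Ioo] with x hx
    have hk : Integrable (fun t => {p : ℝ × ℝ | p.2 < p.1}.indicator
        (uncurry fun t x => (t - x) ^ (-α) * (b - t) ^ (α - 1)) (t, x))
        (volume.restrict (Ioo a b)) := by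
      refine Integrable.of_integral_ne_zero ?_
      rw [integral_Ioo_indicator_triangle_fst (Ioo_subset_Icc_self hx),
        integral_sub_rpow_neg_mul_sub_rpow hα0 hα1 hx.2]
      exact hC.ne'
    refine (hk.const_mul (ψ x)).congr (Eventually.of_forall fun t => ?_)
    simp [indicator_apply]
  · have hnorm : ∀ x ∈ Ioo a b, ∫ t in Ioo a b, ‖{p : ℝ × ℝ | p.2 < p.1}.indicator
        (uncurry fun t x => ψ x * ((t - x) ^ (-α) * (b - t) ^ (α - 1))) (t, x)‖ = ‖ψ x‖ * C := by
      intro x hx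
      simp_rw [norm_indicator_eq_indicator_norm]
      refine (integral_Ioo_indicator_triangle_fst (Ioo_subset_Icc_self hx)
        (F := fun t x => ‖ψ x * ((t - x) ^ (-α) * (b - t) ^ (α - 1))‖)).trans ?_
      rw [hC_def, ← integral_sub_rpow_neg_mul_sub_rpow hα0 hα1 hx.2,
        ← intervalIntegral.integral_const_mul]
      refine intervalIntegral.integral_congr_Ioo_of_le hx.2.le fun t ht => ?_
      rw [norm_mul, Real.norm_of_nonneg (mul_nonneg (Real.rpow_nonneg (sub_nonneg.2 ht.1.le) _)
        (Real.rpow_nonneg (sub_nonneg.2 ht.2.le) _))]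
    refine ((hψ.integrableOn_Icc.mono_set Ioo_subset_Icc_self).norm.mul_const C).congr ?_
    filter_upwards [ae_restrict_mem measurableSet_Ioo] with x hx
    exact (hnorm x hx).symm

theorem integral_sub_rpow_mul_integral_mul_sub_rpow {α a b : ℝ} (hα0 : 0 < α) (hα1 : α < 1)
    (hab : a ≤ b) {ψ : ℝ → ℝ} (hψ : ContinuousOn ψ (Icc a b)) :
    ∫ t in a..b, (b - t) ^ (α - 1) * ∫ x in a..t, ψ x * (t - x) ^ (-α) =
      Real.Gamma (1 - α) * Real.Gamma α * ∫ x in a..b, ψ x := by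
  calc ∫ t in a..b, (b - t) ^ (α - 1) * ∫ x in a..t, ψ x * (t - x) ^ (-α)
      = ∫ t in a..b, ∫ x in a..t, ψ x * ((t - x) ^ (-α) * (b - t) ^ (α - 1)) := by
        refine intervalIntegral.integral_congr fun t _ => ?_
        rw [← intervalIntegral.integral_const_mul]
        exact intervalIntegral.integral_congr fun x _ => by ring
    _ = ∫ x in a..b, ∫ t in x..b, ψ x * ((t - x) ^ (-α) * (b - t) ^ (α - 1)) :=
        integral_integral_swap_triangle hab (integrable_indicator_triangle_mul_sub_rpow hα0 hα1 hψ)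
    _ = ∫ x in a..b, Real.Gamma (1 - α) * Real.Gamma α * ψ x := by
        refine intervalIntegral.integral_congr_Ioo_of_le hab fun x hx => ?_
        rw [intervalIntegral.integral_const_mul, integral_sub_rpow_neg_mul_sub_rpow hα0 hα1 hx.2,
          mul_comm]
    _ = Real.Gamma (1 - α) * Real.Gamma α * ∫ x in a..b, ψ x :=
        intervalIntegral.integral_const_mul _ _

theorem continuousOn_integral_mul_sub_rpow {α a b : ℝ} (hα1 : α < 1) {ψ : ℝ → ℝ}
    (hψ : ContinuousOn ψ (Icc a b)) :
    ContinuousOn (fun t => ∫ x in a..t, ψ x * (t - x) ^ (-α)) (Icc a b) := by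
  obtain ⟨M, hM⟩ := isCompact_Icc.exists_bound_of_continuousOn hψ
  have hmem : ∀ t ∈ Icc a b, ∀ u ∈ Icc (0 : ℝ) 1, a + (t - a) * u ∈ Icc a b := fun t ht u hu =>
    ⟨by nlinarith [ht.1, hu.1], by nlinarith [ht.1, ht.2, hu.1, hu.2]⟩
  have hψt : ∀ t ∈ Icc a b, ContinuousOn (fun u => ψ (a + (t - a) * u)) (Icc 0 1) :=
    fun t ht => hψ.comp (by fun_prop) (hmem t ht)
  -- substituting `x = a + (t - a) * u` moves `t` from the bounds into the integrand
  have hrescale : ∀ t ∈ Icc a b, ∫ x in a..t, ψ x * (t - x) ^ (-α) =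
      (t - a) ^ (1 - α) * ∫ u in Ioc 0 1, ψ (a + (t - a) * u) * (1 - u) ^ (-α) := by
    intro t ht
    have h := intervalIntegral.smul_integral_comp_add_mul (a := 0) (b := 1)
      (fun x => ψ x * (t - x) ^ (-α)) (t - a) a
    simp only [mul_zero, add_zero, mul_one, add_sub_cancel, smul_eq_mul] at h
    rw [← h, intervalIntegral.integral_of_le zero_le_one, sub_eq_add_neg 1 α,
      Real.rpow_one_add' (sub_nonneg.2 ht.1) (by linarith), mul_assoc]
    congr 1
    rw [← integral_const_mul]
    refine setIntegral_congr_fun measurableSet_Ioc fun u hu => ?_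
    rw [show t - (a + (t - a) * u) = (t - a) * (1 - u) by ring,
      Real.mul_rpow (sub_nonneg.2 ht.1) (sub_nonneg.2 hu.2)]
    ring
  refine ContinuousOn.congr ?_ hrescale
  refine (Continuous.continuousOn ?_).mul
    (continuousOn_of_dominated (bound := fun u => M * (1 - u) ^ (-α)) ?_ ?_ ?_ ?_)
  · exact (continuous_id.sub continuous_const).rpow_const fun _ => Or.inr (by linarith)
  · intro t ht
    exact ((hψt t ht).mono Ioc_subset_Icc_self).aestronglyMeasurable measurableSet_Ioc |>.mul
      (Measurable.aestronglyMeasurable (by fun_prop))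
  · intro t ht
    filter_upwards [ae_restrict_mem measurableSet_Ioc] with u hu
    have hpow : 0 ≤ (1 - u) ^ (-α) := Real.rpow_nonneg (sub_nonneg.2 hu.2) _
    rw [norm_mul, Real.norm_of_nonneg hpow]
    exact mul_le_mul_of_nonneg_right (hM _ (hmem t ht u (Ioc_subset_Icc_self hu))) hpow
  · refine Integrable.const_mul ?_ M
    have h : IntervalIntegrable (fun u => (1 - u) ^ (-α)) volume 0 1 := by
      simpa using (intervalIntegral.intervalIntegrable_rpow' (neg_lt_neg hα1)
        (a := 1) (b := 0)).comp_sub_left 1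
    exact h.1
  · filter_upwards [ae_restrict_mem measurableSet_Ioc] with u hu
    exact (hψ.comp (by fun_prop) fun t ht => hmem t ht u (Ioc_subset_Icc_self hu)).mul
      continuousOn_const

theorem intervalIntegrable_sub_rpow {α : ℝ} (hα0 : 0 < α) (a b : ℝ) :
    IntervalIntegrable (fun t => (b - t) ^ (α - 1)) volume a b := by
  simpa using (intervalIntegral.intervalIntegrable_rpow' (by linarith : (-1 : ℝ) < α - 1)
    (a := b - a) (b := b - b)).comp_sub_left b

theorem integral_sub_rpow {α : ℝ} (hα0 : 0 < α) (a b : ℝ) :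
    ∫ t in a..b, (b - t) ^ (α - 1) = (b - a) ^ α / α := by
  rw [intervalIntegral.integral_comp_sub_left (fun y => y ^ (α - 1)) b, sub_self,
    integral_rpow (Or.inl (by linarith)), sub_add_cancel, Real.zero_rpow hα0.ne', sub_zero]

theorem caputoD_one (a : ℝ) (φ' : ℝ → ℝ) : caputoD 1 a φ' = φ' :=
  funext fun _ => if_pos rfl

theorem caputoD_of_ne_one {α : ℝ} (hα : α ≠ 1) (a : ℝ) (φ' : ℝ → ℝ) :
    caputoD α a φ' = fun t => 1 / Real.Gamma (1 - α) * ∫ x in a..t, φ' x * (t - x) ^ (-α) :=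
  funext fun _ => if_neg hα

theorem caputoD_self {α : ℝ} (hα : α ≠ 1) (a : ℝ) (φ' : ℝ → ℝ) : caputoD α a φ' a = 0 := by
  simp [caputoD_of_ne_one hα]

theorem continuousOn_caputoD {α a b : ℝ} (hα1 : α ≤ 1) {φ' : ℝ → ℝ}
    (hφ' : ContinuousOn φ' (Icc a b)) : ContinuousOn (caputoD α a φ') (Icc a b) := by
  rcases hα1.eq_or_lt with rfl | hα1
  · rwa [caputoD_one]
  · rw [caputoD_of_ne_one hα1.ne]
    exact continuousOn_const.mul (continuousOn_integral_mul_sub_rpow hα1 hφ')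

theorem integral_sub_rpow_mul_caputoD {α a b : ℝ} (hα0 : 0 < α) (hα1 : α ≤ 1) (hab : a ≤ b)
    {φ' : ℝ → ℝ} (hφ' : ContinuousOn φ' (Icc a b)) :
    ∫ t in a..b, (b - t) ^ (α - 1) * caputoD α a φ' t = Real.Gamma α * ∫ x in a..b, φ' x := by
  rcases hα1.eq_or_lt with rfl | hα1
  · simp [caputoD_one]
  · have hΓ : Real.Gamma (1 - α) ≠ 0 := (Real.Gamma_pos_of_pos (by linarith)).ne'
    simp only [caputoD_of_ne_one hα1.ne, mul_left_comm _ (1 / Real.Gamma (1 - α)),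
      intervalIntegral.integral_const_mul,
      integral_sub_rpow_mul_integral_mul_sub_rpow hα0 hα1 hab hφ']
    field_simp

theorem stmt_17 (α a b : ℝ) (hα0 : 0 < α) (hα1 : α ≤ 1) (hab : a < b)
    (φ φ' : ℝ → ℝ)
    (hderiv : ∀ x ∈ Set.Icc a b, HasDerivWithinAt φ (φ' x) (Set.Icc a b) x)
    (hcont : ContinuousOn φ' (Set.Icc a b)) :
    ContinuousOn (caputoD α a φ') (Set.Icc a b) ∧
    (α < 1 → caputoD α a φ' a = 0) ∧
    ∃ ξ ∈ Set.Icc a b,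
      φ b = φ a + (1 / Real.Gamma (α + 1)) * caputoD α a φ' ξ * (b - a) ^ α := by
  have hD := continuousOn_caputoD hα1 hcont
  refine ⟨hD, fun h => caputoD_self h.ne a φ', ?_⟩
  have hFTC : ∫ x in a..b, φ' x = φ b - φ a :=
    intervalIntegral.integral_eq_sub_of_hasDerivAt_of_le hab.le
      (fun x hx => (hderiv x hx).continuousWithinAt)
      (fun x hx => (hderiv x (Ioo_subset_Icc_self hx)).hasDerivAt (Icc_mem_nhds hx.1 hx.2))
      (hcont.intervalIntegrable_of_Icc hab.le)
  obtain ⟨ξ, hξ, hmean⟩ := exists_integral_mul_eq_mul_integral hab.le hD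
    (intervalIntegrable_sub_rpow hα0 a b) fun t ht => Real.rpow_nonneg (sub_nonneg.2 ht.2) _
  rw [integral_sub_rpow_mul_caputoD hα0 hα1 hab.le hcont, hFTC, integral_sub_rpow hα0 a b]
    at hmean
  refine ⟨ξ, hξ, ?_⟩
  have hΓ : Real.Gamma α ≠ 0 := (Real.Gamma_pos_of_pos hα0).ne'
  rw [Real.Gamma_add_one hα0.ne']
  field_simp at hmean ⊢
  linarith
end
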